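/- Let q_s, q_t, q_r ∈ [1/2, 1] and p_{s,t}, p_{t,r}, p_{s,r} ∈ [0,1] with p_{s,t} > 1/2 and p_{s,r} ≥ 2*p_{s,t}*p_{t,r} - p_{s,t} - p_{t,r} + 1. If the delegation from t to r is accuracy-improving, i.e., q_r*p_{t,r} + (1-q_r)*(1-p_{t,r}) > q_t, and the delegation from s to t is locally positive, i.e., q_t*p_{s,t} + (1-q_t)*(1-p_{s,t}) > q_s, then q_r*p_{s,r} + (1-q_r)*(1-p_{s,r}) > q_s. -/

import Mathlib

/-! Writing `c = 2q - 1` for the competence of an agent and `ρ = 2p - 1` for the correlation of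
two types, inherited accuracy becomes `(1 + c ρ) / 2` and the hypothesis on `p_{s,r}` reads
`ρ_{s,t} ρ_{t,r} ≤ ρ_{s,r}`. The two delegations give `c_s < c_t ρ_{s,t}` and `c_t < c_r ρ_{t,r}`;
multiplying the second by `ρ_{s,t} > 0` and using `c_r ≥ 0` yields `c_s < c_r ρ_{s,r}`. -/

lemma mul_add_one_sub_mul_one_sub_eq (q p : ℝ) :
    q * p + (1 - q) * (1 - p) = (1 + (2 * q - 1) * (2 * p - 1)) / 2 := by
  ring

lemma lt_mul_of_lt_mul_of_lt_mul {a b c x y z : ℝ} (hc : 0 ≤ c) (hx : 0 < x)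
    (hxyz : x * y ≤ z) (hab : a < b * x) (hbc : b < c * y) : a < c * z :=
  calc a < b * x := hab
    _ < c * y * x := mul_lt_mul_of_pos_right hbc hx
    _ = c * (x * y) := by ring
    _ ≤ c * z := mul_le_mul_of_nonneg_left hxyz hc

theorem locally_positive_chain (qs qt qr pst ptr psr : ℝ)
    (hqr : qr ∈ Set.Icc (1/2 : ℝ) 1)
    (hpst2 : 1/2 < pst)
    (hcomp : 2 * pst * ptr - pst - ptr + 1 ≤ psr)
    (htr : qt < qr * ptr + (1 - qr) * (1 - ptr))
    (hst : qs < qt * pst + (1 - qt) * (1 - pst)) :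
    qs < qr * psr + (1 - qr) * (1 - psr) := by
  rw [mul_add_one_sub_mul_one_sub_eq] at htr hst ⊢
  have hcorr : (2 * pst - 1) * (2 * ptr - 1) ≤ 2 * psr - 1 := by linarith
  have hchain : 2 * qs - 1 < (2 * qr - 1) * (2 * psr - 1) :=
    lt_mul_of_lt_mul_of_lt_mul (b := 2 * qt - 1) (by linarith [hqr.1]) (by linarith) hcorr
      (by linarith) (by linarith)
  linarith
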